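/- For integers m ≥ n ≥ 3, define I_m = ⋃_{j ∈ ℕ} ([1/2 + 2j, 1/2 + 1/(m2^m) + 2j) ∪ [1 − 1/(m2^m) + 2j, 1 + 1/(m2^m) + 2j) ∪ [3/2 − 1/(m2^m) + 2j, 3/2 + 2j)) and J_n = ⋃_{k ∈ ℕ} [1/2^{n+1} + k/2^{n−1}, 3/2^{n+1} + k/2^{n−1}). Then I_m ∩ J_n = ∅; moreover I_m ∩ J_2 = ∅ as well. -/
import Mathlib


/-- `I m`: the set of directions along which `γ₀` directly crosses the `m`-th aperture. -/
noncomputable def Iset (m : ℕ) : Set ℝ :=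
  ⋃ j : ℕ,
    (Set.Ico ((1:ℝ)/2 + 2 * j) (1/2 + 1 / ((m : ℝ) * 2 ^ m) + 2 * j) ∪
     Set.Ico ((1:ℝ) - 1 / ((m : ℝ) * 2 ^ m) + 2 * j) (1 + 1 / ((m : ℝ) * 2 ^ m) + 2 * j) ∪
     Set.Ico ((3:ℝ)/2 - 1 / ((m : ℝ) * 2 ^ m) + 2 * j) (3/2 + 2 * j))

/-- `J n`: the set of directions along which `γₙ` reaches the aperture `G_{n+1}`. -/
noncomputable def Jset (n : ℕ) : Set ℝ :=
  ⋃ k : ℕ,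
    Set.Ico ((1:ℝ) / 2 ^ (n + 1) + (k : ℝ) / 2 ^ ((n : ℤ) - 1))
            ((3:ℝ) / 2 ^ (n + 1) + (k : ℝ) / 2 ^ ((n : ℤ) - 1))

private lemma key_arith (M k : ℕ) (y : ℝ) (h1 : 4*(M:ℝ) - 1 ≤ y) (h2 : y < 4*(M:ℝ) + 1)
    (h3 : 4*(k:ℝ) + 1 ≤ y) (h4 : y < 4*(k:ℝ) + 3) : False := by
  have hkM : (k:ℝ) < M := by linarith
  have hkM' : k < M := by exact_mod_cast hkM
  have : (k:ℝ) + 1 ≤ M := by exact_mod_cast hkM'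
  linarith

private lemma main_disj (m n : ℕ) (hn : 2 ≤ n) (hnm : n ≤ m) : Iset m ∩ Jset n = ∅ := by
  obtain ⟨p, rfl⟩ : ∃ p, n = p + 2 := ⟨n - 2, by omega⟩
  rw [Set.eq_empty_iff_forall_notMem]
  rintro x ⟨hI, hJ⟩
  rw [Iset, Set.mem_iUnion] at hI
  rw [Jset, Set.mem_iUnion] at hJ
  obtain ⟨j, hj⟩ := hI
  obtain ⟨k, hk⟩ := hJ
  have hzpow : (2:ℝ) ^ (((p+2:ℕ):ℤ) - 1) = 2 ^ (p+1) := by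
    rw [show ((p+2:ℕ):ℤ) - 1 = ((p+1:ℕ):ℤ) by push_cast; ring, zpow_natCast]
  rw [Set.mem_Ico, hzpow] at hk
  have hm2 : 2 ≤ m := le_trans hn hnm
  have hb : (0:ℝ) < 2 ^ (p+1) := by positivity
  have ha : (0:ℝ) < 2 ^ (p+3) := by positivity
  have hmpos : (0:ℝ) < (m:ℝ) * 2 ^ m := by
    have : (0:ℝ) < (m:ℝ) := by exact_mod_cast (by omega : 0 < m)
    positivity
  -- the aperture width, scaled by 2^(p+3), is at most 1
  have hε : 1 / ((m:ℝ) * 2 ^ m) * 2 ^ (p+3) ≤ 1 := by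
    rw [div_mul_eq_mul_div, one_mul, div_le_one hmpos]
    have h1 : (2:ℝ) ^ (p+3) ≤ 2 ^ (m+1) := by
      apply pow_le_pow_right₀ (by norm_num) (by omega)
    have h2 : (2:ℝ) ^ (m+1) ≤ (m:ℝ) * 2 ^ m := by
      rw [pow_succ]
      have hm' : (2:ℝ) ≤ (m:ℝ) := by exact_mod_cast hm2
      have : (0:ℝ) < 2 ^ m := by positivity
      nlinarith
    linarith
  -- scaled J bounds
  have hJ1 : 4*(k:ℝ) + 1 ≤ x * 2 ^ (p+3) := by
    have := mul_le_mul_of_nonneg_right hk.1 ha.le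
    have e : ((1:ℝ) / 2 ^ (p+2+1) + (k:ℝ) / 2 ^ (p+1)) * 2 ^ (p+3) = 4*(k:ℝ) + 1 := by
      field_simp
      ring
    linarith [e ▸ this]
  have hJ2 : x * 2 ^ (p+3) < 4*(k:ℝ) + 3 := by
    have := mul_lt_mul_of_pos_right hk.2 ha
    have e : ((3:ℝ) / 2 ^ (p+2+1) + (k:ℝ) / 2 ^ (p+1)) * 2 ^ (p+3) = 4*(k:ℝ) + 3 := by
      field_simp
      ring
    linarith [e ▸ this]
  rcases hj with (h | h) | h <;> rw [Set.mem_Ico] at h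
  · -- interval at 1/2 + 2j :  M = 2^p + 2^(p+2) j
    refine key_arith (2^p + 2^(p+2) * j) k (x * 2 ^ (p+3)) ?_ ?_ hJ1 hJ2
    · have := mul_le_mul_of_nonneg_right h.1 ha.le
      have e : ((1:ℝ)/2 + 2*(j:ℝ)) * 2 ^ (p+3) = 4*((2^p + 2^(p+2) * j : ℕ):ℝ) := by
        push_cast; field_simp; ring
      linarith [e ▸ this]
    · have := mul_lt_mul_of_pos_right h.2 ha
      have e : ((1:ℝ)/2 + 1 / ((m:ℝ) * 2 ^ m) + 2*(j:ℝ)) * 2 ^ (p+3)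
          = 4*((2^p + 2^(p+2) * j : ℕ):ℝ) + 1 / ((m:ℝ) * 2 ^ m) * 2 ^ (p+3) := by
        push_cast; field_simp; ring
      rw [e] at this
      linarith
  · -- interval at 1 + 2j :  M = 2^(p+1) + 2^(p+2) j
    refine key_arith (2^(p+1) + 2^(p+2) * j) k (x * 2 ^ (p+3)) ?_ ?_ hJ1 hJ2
    · have := mul_le_mul_of_nonneg_right h.1 ha.le
      have e : ((1:ℝ) - 1 / ((m:ℝ) * 2 ^ m) + 2*(j:ℝ)) * 2 ^ (p+3)
          = 4*((2^(p+1) + 2^(p+2) * j : ℕ):ℝ) - 1 / ((m:ℝ) * 2 ^ m) * 2 ^ (p+3) := by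
        push_cast; field_simp; ring
      rw [e] at this
      linarith
    · have := mul_lt_mul_of_pos_right h.2 ha
      have e : ((1:ℝ) + 1 / ((m:ℝ) * 2 ^ m) + 2*(j:ℝ)) * 2 ^ (p+3)
          = 4*((2^(p+1) + 2^(p+2) * j : ℕ):ℝ) + 1 / ((m:ℝ) * 2 ^ m) * 2 ^ (p+3) := by
        push_cast; field_simp; ring
      rw [e] at this
      linarith
  · -- interval at 3/2 + 2j :  M = 3·2^p + 2^(p+2) j
    refine key_arith (3 * 2^p + 2^(p+2) * j) k (x * 2 ^ (p+3)) ?_ ?_ hJ1 hJ2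
    · have := mul_le_mul_of_nonneg_right h.1 ha.le
      have e : ((3:ℝ)/2 - 1 / ((m:ℝ) * 2 ^ m) + 2*(j:ℝ)) * 2 ^ (p+3)
          = 4*((3 * 2^p + 2^(p+2) * j : ℕ):ℝ) - 1 / ((m:ℝ) * 2 ^ m) * 2 ^ (p+3) := by
        push_cast; field_simp; ring
      rw [e] at this
      linarith
    · have := mul_lt_mul_of_pos_right h.2 ha
      have e : ((3:ℝ)/2 + 2*(j:ℝ)) * 2 ^ (p+3) = 4*((3 * 2^p + 2^(p+2) * j : ℕ):ℝ) := by
        push_cast; field_simp; ring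
      linarith [e ▸ this]

/-- If `γ₀` crosses `G_m` then `γₙ` does not reach `G_{n+1}` for `2 ≤ n ≤ m`:
the sets `I_m` and `J_n` are disjoint for `3 ≤ n ≤ m`, and also `I_m ∩ J_2 = ∅`. -/
theorem Iset_disjoint_Jset :
    (∀ m n : ℕ, 3 ≤ n → n ≤ m → Iset m ∩ Jset n = ∅) ∧
    (∀ m : ℕ, 2 ≤ m → Iset m ∩ Jset 2 = ∅) := by
  exact ⟨fun m n hn hnm => main_disj m n (by omega) hnm,
         fun m hm => main_disj m 2 le_rfl hm⟩
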